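/- Let 0 < α < β and p₁, p₂ > 0 with p₁ + p₂ = 1. For every n ≥ 1, every ω ∈ [0,1] and every x ∈ J_n(ω): T_ω^k(x) ∈ I_{n−k}(φ^k(ω)) for each 1 ≤ k ≤ n−1 (in particular T_ω^k(x) ≤ 1/2 for 1 ≤ k ≤ n−1), and T_ω^n(x) ∈ (1/2,1]; moreover the map T_ω^n restricted to J_n(ω) is a bijection onto (1/2,1]. -/

import Mathlib

noncomputable section

open Real MeasureTheory Set Filter

/-- The LSV map `T_γ` on `[0,1]`: `x(1+2^γ x^γ)` on `[0,1/2]`, `2x-1` on `(1/2,1]`. -/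
noncomputable def lsv (γ : ℝ) (x : ℝ) : ℝ :=
  if x ≤ 1 / 2 then x * (1 + 2 ^ γ * x ^ γ) else 2 * x - 1

/-- The left branch of the LSV map. -/
noncomputable def lsvLeft (γ : ℝ) (x : ℝ) : ℝ := x * (1 + 2 ^ γ * x ^ γ)

/-- The random parameter selection: `α` for `ω ∈ [0,p₁)`, `β` for `ω ∈ [p₁,1]`. -/
noncomputable def sel (α β p₁ : ℝ) (ω : ℝ) : ℝ := if ω < p₁ then α else β

/-- The randomizing map `φ` on `[0,1]`. -/
noncomputable def phiMap (p₁ p₂ : ℝ) (ω : ℝ) : ℝ :=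
  if ω < p₁ then ω / p₁ else (ω - p₁) / p₂

/-- The skew product `S(x,ω) = (T_{α(ω)}(x), φ(ω))`. -/
noncomputable def skew (α β p₁ p₂ : ℝ) (z : ℝ × ℝ) : ℝ × ℝ :=
  (lsv (sel α β p₁ z.2) z.1, phiMap p₁ p₂ z.2)

/-- Random iterates: `randIter n ω = T_ω^n = T_{α(φ^{n-1}ω)} ∘ ⋯ ∘ T_{α(ω)}`. -/
noncomputable def randIter (α β p₁ p₂ : ℝ) : ℕ → ℝ → ℝ → ℝ
  | 0, _, x => x
  | n + 1, ω, x => randIter α β p₁ p₂ n (phiMap p₁ p₂ ω) (lsv (sel α β p₁ ω) x)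

/-- The deterministic backward orbit `x_n^γ`: `x₀^γ = 1`, `x₁^γ = 1/2`, and for `n ≥ 2`,
`x_n^γ` is the (unique) point of `(0,1/2]` with `T_γ(x_n^γ) = x_{n-1}^γ`. -/
def IsDetBackOrbit (γ : ℝ) (x : ℕ → ℝ) : Prop :=
  x 0 = 1 ∧ x 1 = 1 / 2 ∧
    ∀ n, 2 ≤ n → x n ∈ Set.Ioc (0 : ℝ) (1 / 2) ∧ lsv γ (x n) = x (n - 1)

/-- The random backward orbit `x_n(ω)`: `x₀(ω) = 1`, `x₁(ω) = 1/2`, and for `n ≥ 2`,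
`x_n(ω)` is the (unique) point of `(0,1/2]` with `T_{α(ω)}(x_n(ω)) = x_{n-1}(φω)`. -/
def IsRandBackOrbit (α β p₁ p₂ : ℝ) (X : ℕ → ℝ → ℝ) : Prop :=
  (∀ ω, X 0 ω = 1) ∧ (∀ ω, X 1 ω = 1 / 2) ∧
    ∀ n, 2 ≤ n → ∀ ω, X n ω ∈ Set.Ioc (0 : ℝ) (1 / 2) ∧
      lsv (sel α β p₁ ω) (X n ω) = X (n - 1) (phiMap p₁ p₂ ω)

/-- The points `x'_n(ω)`: `x'₀(ω) = 1`, `x'₁(ω) = 3/4`, and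
`x'_n(ω) = (x_n(φω) + 1)/2` for `n ≥ 2`. -/
def IsRandBackOrbitPrime (p₁ p₂ : ℝ) (X X' : ℕ → ℝ → ℝ) : Prop :=
  (∀ ω, X' 0 ω = 1) ∧ (∀ ω, X' 1 ω = 3 / 4) ∧
    ∀ n, 2 ≤ n → ∀ ω, X' n ω = (X n (phiMap p₁ p₂ ω) + 1) / 2

/-- First return time of `(x,ω)` to `(1/2,1] × [0,1]` under the skew product. -/
noncomputable def returnTime (α β p₁ p₂ : ℝ) (x ω : ℝ) : ℕ :=
  sInf {k : ℕ | 1 ≤ k ∧ 1 / 2 < randIter α β p₁ p₂ k ω x}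

/-! On `(0, 1/2]` every `T_γ` with `γ ≥ 0` is its left branch, a continuous strictly increasing
map; so `T_{α(ω)}` sends `[x_{m+2}(ω), x_{m+1}(ω)]` increasingly and continuously onto
`[x_{m+1}(φω), x_m(φω)]`, hence `I_{m+1}(ω)` bijectively onto `I_m(φω)`. Composing these
bijections, `T_ω^k` maps `I_{m+k}(ω)` bijectively onto `I_m(φ^k ω)`, and `I_0 = (1/2, 1]`.
On `J_n(ω) ⊆ (1/2, 1]` the first step is `x ↦ 2x - 1`, which maps `J_n(ω)` onto `I_{n-1}(φω)`
by the definition of `x'_n`. -/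

theorem StrictMonoOn.bijOn_Ioc_of_continuousOn {α δ : Type*} [ConditionallyCompleteLinearOrder α]
    [TopologicalSpace α] [OrderTopology α] [DenselyOrdered α] [LinearOrder δ]
    [TopologicalSpace δ] [OrderClosedTopology δ] {f : α → δ} {a b : α} (hab : a ≤ b)
    (hmono : StrictMonoOn f (Icc a b)) (hcont : ContinuousOn f (Icc a b)) :
    BijOn f (Ioc a b) (Ioc (f a) (f b)) := by
  refine ⟨fun x hx => ⟨?_, ?_⟩, (hmono.mono Ioc_subset_Icc_self).injOn,
    intermediate_value_Ioc hab hcont⟩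
  · exact hmono (left_mem_Icc.2 hab) (Ioc_subset_Icc_self hx) hx.1
  · exact hmono.monotoneOn (Ioc_subset_Icc_self hx) (right_mem_Icc.2 hab) hx.2

section LSV

variable {γ x : ℝ}

theorem lsv_of_le_half (h : x ≤ 1 / 2) : lsv γ x = lsvLeft γ x := if_pos h

theorem lsv_of_half_lt (h : 1 / 2 < x) : lsv γ x = 2 * x - 1 := if_neg h.not_ge

theorem lsv_half (γ : ℝ) : lsv γ (1 / 2) = 1 := by
  rw [lsv_of_le_half le_rfl, lsvLeft, ← Real.mul_rpow (by norm_num) (by norm_num)]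
  norm_num

theorem lsvLeft_strictMonoOn (hγ : 0 ≤ γ) : StrictMonoOn (lsvLeft γ) (Ici 0) := by
  intro x (hx : 0 ≤ x) y _ hxy
  have hpow : x ^ γ ≤ y ^ γ := Real.rpow_le_rpow hx hxy.le hγ
  have h2γ : (0 : ℝ) < 2 ^ γ := Real.rpow_pos_of_pos two_pos γ
  have hfac : 0 < 1 + 2 ^ γ * y ^ γ := by
    have := Real.rpow_nonneg (hx.trans hxy.le) γ
    positivity
  calc x * (1 + 2 ^ γ * x ^ γ) ≤ x * (1 + 2 ^ γ * y ^ γ) := by gcongr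
    _ < y * (1 + 2 ^ γ * y ^ γ) := mul_lt_mul_of_pos_right hxy hfac

theorem continuous_lsvLeft (hγ : 0 ≤ γ) : Continuous (lsvLeft γ) := by
  have := Real.continuous_rpow_const hγ
  unfold lsvLeft
  fun_prop

end LSV

theorem sel_nonneg {α β : ℝ} (hα : 0 ≤ α) (hβ : 0 ≤ β) (p₁ ω : ℝ) : 0 ≤ sel α β p₁ ω := by
  unfold sel
  split_ifs <;> assumption

theorem randIter_succ_eq_comp (α β p₁ p₂ : ℝ) (n : ℕ) (ω : ℝ) :
    randIter α β p₁ p₂ (n + 1) ω =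
      randIter α β p₁ p₂ n (phiMap p₁ p₂ ω) ∘ lsv (sel α β p₁ ω) :=
  rfl

namespace IsRandBackOrbit

variable {α β p₁ p₂ : ℝ} {X : ℕ → ℝ → ℝ} (hX : IsRandBackOrbit α β p₁ p₂ X)
include hX

theorem pos (n : ℕ) (ω : ℝ) : 0 < X n ω := by
  match n with
  | 0 => rw [hX.1 ω]; norm_num
  | 1 => rw [hX.2.1 ω]; norm_num
  | m + 2 => exact (hX.2.2 (m + 2) (by omega) ω).1.1

theorem le_half {n : ℕ} (hn : n ≠ 0) (ω : ℝ) : X n ω ≤ 1 / 2 := by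
  match n, hn with
  | 1, _ => rw [hX.2.1 ω]
  | m + 2, _ => exact (hX.2.2 (m + 2) (by omega) ω).1.2

theorem lsvLeft_succ (n : ℕ) (ω : ℝ) :
    lsvLeft (sel α β p₁ ω) (X (n + 1) ω) = X n (phiMap p₁ p₂ ω) := by
  rw [← lsv_of_le_half (hX.le_half n.succ_ne_zero ω)]
  match n with
  | 0 => rw [hX.2.1 ω, lsv_half, hX.1]
  | m + 1 => exact (hX.2.2 (m + 2) (by omega) ω).2

variable (hα : 0 ≤ α) (hβ : 0 ≤ β)
include hα hβ

theorem succ_lt (n : ℕ) (ω : ℝ) : X (n + 1) ω < X n ω := by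
  induction n generalizing ω with
  | zero => rw [hX.1 ω, hX.2.1 ω]; norm_num
  | succ m ih =>
    have hmono := lsvLeft_strictMonoOn (sel_nonneg hα hβ p₁ ω)
    rw [← hmono.lt_iff_lt (hX.pos _ ω).le (hX.pos _ ω).le, hX.lsvLeft_succ, hX.lsvLeft_succ]
    exact ih _

theorem bijOn_lsv (m : ℕ) (ω : ℝ) :
    BijOn (lsv (sel α β p₁ ω)) (Ioc (X (m + 2) ω) (X (m + 1) ω))
      (Ioc (X (m + 1) (phiMap p₁ p₂ ω)) (X m (phiMap p₁ p₂ ω))) := by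
  have hγ := sel_nonneg hα hβ p₁ ω
  have hbij := StrictMonoOn.bijOn_Ioc_of_continuousOn (hX.succ_lt hα hβ (m + 1) ω).le
    ((lsvLeft_strictMonoOn hγ).mono fun x hx => (hX.pos (m + 2) ω).le.trans hx.1)
    (continuous_lsvLeft hγ).continuousOn
  rw [hX.lsvLeft_succ, hX.lsvLeft_succ] at hbij
  exact hbij.congr fun x hx => (lsv_of_le_half (hx.2.trans (hX.le_half m.succ_ne_zero ω))).symm

theorem bijOn_randIter (k : ℕ) : ∀ m ω,
    BijOn (randIter α β p₁ p₂ k ω) (Ioc (X (m + k + 1) ω) (X (m + k) ω))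
      (Ioc (X (m + 1) ((phiMap p₁ p₂)^[k] ω)) (X m ((phiMap p₁ p₂)^[k] ω))) := by
  induction k with
  | zero => exact fun m ω => bijOn_id _
  | succ k ih =>
    intro m ω
    rw [randIter_succ_eq_comp, Function.iterate_succ_apply]
    exact (ih m _).comp (hX.bijOn_lsv hα hβ (m + k) ω)

theorem randIter_mem_Ioc {n k : ℕ} (hk : k ≤ n) {ω x : ℝ}
    (hx : x ∈ Ioc (X (n + 1) ω) (X n ω)) :
    randIter α β p₁ p₂ k ω x ∈
      Ioc (X (n - k + 1) ((phiMap p₁ p₂)^[k] ω)) (X (n - k) ((phiMap p₁ p₂)^[k] ω)) := by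
  rw [← Nat.sub_add_cancel hk] at hx
  exact (hX.bijOn_randIter hα hβ k (n - k) ω).mapsTo hx

theorem bijOn_lsv_Ioc_prime {X' : ℕ → ℝ → ℝ} (hX' : IsRandBackOrbitPrime p₁ p₂ X X')
    (m : ℕ) (ω : ℝ) :
    BijOn (lsv (sel α β p₁ ω)) (Ioc (X' (m + 1) ω) (X' m ω))
      (Ioc (X (m + 1) (phiMap p₁ p₂ ω)) (X m (phiMap p₁ p₂ ω))) := by
  have hX'_eq : ∀ n, X' n ω = (X n (phiMap p₁ p₂ ω) + 1) / 2 := fun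
    | 0 => by rw [hX'.1 ω, hX.1]; norm_num
    | 1 => by rw [hX'.2.1 ω, hX.2.1]; norm_num
    | n + 2 => hX'.2.2 (n + 2) (by omega) ω
  have hhalf : 1 / 2 < X' (m + 1) ω := by
    rw [hX'_eq]; linarith [hX.pos (m + 1) (phiMap p₁ p₂ ω)]
  have hbij := StrictMonoOn.bijOn_Ioc_of_continuousOn (f := fun x : ℝ => 2 * x - 1)
    (a := X' (m + 1) ω) (b := X' m ω)
    (by rw [hX'_eq, hX'_eq]; linarith [hX.succ_lt hα hβ m (phiMap p₁ p₂ ω)])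
    (fun x _ y _ hxy => by dsimp only; linarith) (by fun_prop)
  have hends : ∀ n, 2 * X' n ω - 1 = X n (phiMap p₁ p₂ ω) := fun n => by rw [hX'_eq]; ring
  simp only [hends] at hbij
  exact hbij.congr fun x hx => (lsv_of_half_lt (hhalf.trans hx.1)).symm

end IsRandBackOrbit

theorem Jn_returns_in_n_steps_general (α β p₁ p₂ : ℝ) (hα : 0 < α) (hαβ : α < β)
    (X X' : ℕ → ℝ → ℝ) (hX : IsRandBackOrbit α β p₁ p₂ X)
    (hX' : IsRandBackOrbitPrime p₁ p₂ X X')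
    (n : ℕ) (hn : 1 ≤ n) (ω : ℝ) :
    (∀ x ∈ Set.Ioc (X' n ω) (X' (n - 1) ω),
      (∀ k : ℕ, 1 ≤ k → k ≤ n - 1 →
        randIter α β p₁ p₂ k ω x ∈
          Set.Ioc (X (n - k + 1) ((phiMap p₁ p₂)^[k] ω)) (X (n - k) ((phiMap p₁ p₂)^[k] ω))
        ∧ randIter α β p₁ p₂ k ω x ≤ 1 / 2) ∧
      randIter α β p₁ p₂ n ω x ∈ Set.Ioc (1 / 2 : ℝ) 1) ∧
    Set.BijOn (fun x => randIter α β p₁ p₂ n ω x)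
      (Set.Ioc (X' n ω) (X' (n - 1) ω)) (Set.Ioc (1 / 2 : ℝ) 1) := by
  have hβ : 0 ≤ β := hα.le.trans hαβ.le
  obtain ⟨j, rfl⟩ : ∃ j, n = j + 1 := ⟨n - 1, by omega⟩
  rw [Nat.add_sub_cancel]
  have hfirst := hX.bijOn_lsv_Ioc_prime hα.le hβ hX' j ω
  have hbij : BijOn (randIter α β p₁ p₂ (j + 1) ω) (Ioc (X' (j + 1) ω) (X' j ω))
      (Ioc (1 / 2) 1) := by
    have hrest := hX.bijOn_randIter hα.le hβ j 0 (phiMap p₁ p₂ ω)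
    rw [zero_add, hX.1, hX.2.1] at hrest
    exact hrest.comp hfirst
  refine ⟨fun x hx => ⟨fun k hk1 hkj => ?_, hbij.mapsTo hx⟩, hbij⟩
  obtain ⟨i, rfl⟩ : ∃ i, k = i + 1 := ⟨k - 1, by omega⟩
  have hmem := hX.randIter_mem_Ioc hα.le hβ (by omega : i ≤ j) (hfirst.mapsTo hx)
  rw [show j + 1 - (i + 1) = j - i by omega, randIter_succ_eq_comp, Function.iterate_succ_apply]
  exact ⟨hmem, hmem.2.trans (hX.le_half (by omega) _)⟩

/-- For `0 < α < β`, `p₁, p₂ > 0` with `p₁ + p₂ = 1`, `n ≥ 1`,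
`ω ∈ [0,1]` and `x ∈ J_n(ω)`: `T_ω^k(x) ∈ I_{n−k}(φ^k ω)` (in particular `T_ω^k(x) ≤ 1/2`)
for `1 ≤ k ≤ n−1`, `T_ω^n(x) ∈ (1/2,1]`, and `T_ω^n` maps `J_n(ω)` bijectively onto
`(1/2,1]`. -/
theorem Jn_returns_in_n_steps (α β p₁ p₂ : ℝ) (hα : 0 < α) (hαβ : α < β)
    (hp₁ : 0 < p₁) (hp₂ : 0 < p₂) (hp : p₁ + p₂ = 1)
    (X X' : ℕ → ℝ → ℝ) (hX : IsRandBackOrbit α β p₁ p₂ X)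
    (hX' : IsRandBackOrbitPrime p₁ p₂ X X')
    (n : ℕ) (hn : 1 ≤ n) (ω : ℝ) (hω : ω ∈ Set.Icc (0 : ℝ) 1) :
    (∀ x ∈ Set.Ioc (X' n ω) (X' (n - 1) ω),
      (∀ k : ℕ, 1 ≤ k → k ≤ n - 1 →
        randIter α β p₁ p₂ k ω x ∈
          Set.Ioc (X (n - k + 1) ((phiMap p₁ p₂)^[k] ω)) (X (n - k) ((phiMap p₁ p₂)^[k] ω))
        ∧ randIter α β p₁ p₂ k ω x ≤ 1 / 2) ∧
      randIter α β p₁ p₂ n ω x ∈ Set.Ioc (1 / 2 : ℝ) 1) ∧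
    Set.BijOn (fun x => randIter α β p₁ p₂ n ω x)
      (Set.Ioc (X' n ω) (X' (n - 1) ω)) (Set.Ioc (1 / 2 : ℝ) 1) :=
  Jn_returns_in_n_steps_general α β p₁ p₂ hα hαβ X X' hX hX' n hn ω
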